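/- Monotonicity of the charged Hawking mass (Proposition 2.2). Let n ≥ 3, λ ≥ 0, r₊ > 0, and let V, k_I, k_S, E_I be spherically symmetric charged radial data on [r₊,∞) satisfying the radial Einstein–Maxwell constraint equations with uncharged energy density μ̂ and radial momentum density Ĵ_ν and the Gauss law, with charge q. Assume the dominant energy condition μ̂(r) ≥ |Ĵ_ν(r)| for all r > r₊ and the outermost condition H(r) > |k_S(r)| for all r > r₊. Then the charged Hawking mass m_CH is non-decreasing on [r₊,∞): for all r₊ ≤ r₁ ≤ r₂, m_CH(r₁) ≤ m_CH(r₂) (assuming m_CH is continuous at r₊). -/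

import Mathlib

/-!
Differentiating `m_CH` and eliminating the scalar curvature by the Hamiltonian constraint, `k_I`
by the momentum constraint and `q` by the Gauss law gives
`m_CH' = 8π r^{n-1} (μ̂ - k_S Ĵ_ν / H) / (n-1)` on `(r₊, ∞)`. The outermost condition
`|k_S| < H` and the dominant energy condition give `|k_S Ĵ_ν / H| ≤ |Ĵ_ν| ≤ μ̂`, so `m_CH' ≥ 0`,
and continuity at `r₊` extends the monotonicity to `[r₊, ∞)`.
-/

open Real Filter

/-- Mean curvature of the coordinate sphere of radius `r`: `H = (n-1)√(V r)/r`. -/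
noncomputable def sphMeanCurv (n : ℕ) (V : ℝ → ℝ) (r : ℝ) : ℝ :=
  ((n : ℝ) - 1) * Real.sqrt (V r) / r

/-- Scalar curvature of `g = V⁻¹dr² + r²·(round metric)`:
`R = (n-1) r^{1-n} (d/dr)[r^{n-2}(1 - V)]`. -/
noncomputable def sphScalCurv (n : ℕ) (V : ℝ → ℝ) (r : ℝ) : ℝ :=
  ((n : ℝ) - 1) / r ^ (n - 1) * deriv (fun ρ => ρ ^ (n - 2) * (1 - V ρ)) r

/-- The charged Hawking mass
`m_CH(r) = (r^{n-2}/2)[1 - V + r² k_S²/(n-1)²] + λ r^n/2 + q²/(2 r^{n-2})`. -/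
noncomputable def chargedHawkingMass (n : ℕ) (lam q : ℝ) (V kS : ℝ → ℝ) (r : ℝ) : ℝ :=
  r ^ (n - 2) / 2 * (1 - V r + r ^ 2 * kS r ^ 2 / ((n : ℝ) - 1) ^ 2)
    + lam * r ^ n / 2 + q ^ 2 / (2 * r ^ (n - 2))

open Set

lemma monotoneOn_Ici_of_hasDerivAt_nonneg {f f' : ℝ → ℝ} {a : ℝ}
    (hfa : ContinuousWithinAt f (Ici a) a) (hf : ∀ x, a < x → HasDerivAt f (f' x) x)
    (hf' : ∀ x, a < x → 0 ≤ f' x) : MonotoneOn f (Ici a) := by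
  refine monotoneOn_of_hasDerivWithinAt_nonneg (convex_Ici a) (fun x hx => ?_)
    (fun x hx => ?_) (fun x hx => hf' x (by simpa using hx))
  · rcases (mem_Ici.mp hx).eq_or_lt with rfl | hax
    · exact hfa
    · exact (hf x hax).continuousAt.continuousWithinAt
  · exact (hf x (by simpa using hx)).hasDerivWithinAt

lemma hasDerivAt_inv_pow {𝕜 : Type*} [NontriviallyNormedField 𝕜] (k : ℕ) {x : 𝕜}
    (hx : x ≠ 0) : HasDerivAt (fun y => (y ^ k)⁻¹) (-k / x ^ (k + 1)) x := by
  have h := hasDerivAt_zpow (-k) x (Or.inl hx)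
  simp only [zpow_neg, zpow_natCast] at h
  refine h.congr_deriv ?_
  rw [show (-(k : ℤ) - 1) = -((k + 1 : ℕ) : ℤ) by push_cast; ring, zpow_neg, zpow_natCast]
  push_cast
  ring

lemma chargedHawkingMass_eq {n : ℕ} (hn : 2 ≤ n) (lam q : ℝ) (V kS : ℝ → ℝ) :
    chargedHawkingMass n lam q V kS = fun ρ =>
      ρ ^ (n - 2) * (1 - V ρ) / 2 + ρ ^ n * kS ρ ^ 2 / (2 * ((n : ℝ) - 1) ^ 2)
        + lam * ρ ^ n / 2 + q ^ 2 / 2 * (ρ ^ (n - 2))⁻¹ := by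
  funext ρ
  have hρ : ρ ^ n = ρ ^ (n - 2) * ρ ^ 2 := by rw [← pow_add, Nat.sub_add_cancel hn]
  rcases eq_or_ne (ρ ^ (n - 2)) 0 with h | h
  · simp [chargedHawkingMass, hρ, h]
  · simp only [chargedHawkingMass, hρ]
    field_simp

lemma hasDerivAt_chargedHawkingMass {n : ℕ} (hn : 2 ≤ n) (lam q : ℝ) {V kS : ℝ → ℝ} {r : ℝ}
    (hr : r ≠ 0) (hV : DifferentiableAt ℝ V r) (hkS : DifferentiableAt ℝ kS r) :
    HasDerivAt (chargedHawkingMass n lam q V kS)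
      (r ^ (n - 1) / ((n : ℝ) - 1) / 2 * (sphScalCurv n V r
          + n * kS r ^ 2 / ((n : ℝ) - 1) + 2 * r * kS r * deriv kS r / ((n : ℝ) - 1)
          + n * ((n : ℝ) - 1) * lam)
        - ((n : ℝ) - 2) * q ^ 2 / (2 * r ^ (n - 1))) r := by
  have hA : HasDerivAt (fun ρ => ρ ^ (n - 2) * (1 - V ρ))
      (deriv (fun ρ => ρ ^ (n - 2) * (1 - V ρ)) r) r :=
    ((differentiableAt_pow _).mul ((differentiableAt_const 1).sub hV)).hasDerivAt
  have hB : HasDerivAt (fun ρ => ρ ^ n * kS ρ ^ 2)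
      (n * r ^ (n - 1) * kS r ^ 2 + r ^ n * ((2 : ℕ) * kS r ^ (2 - 1) * deriv kS r)) r :=
    (hasDerivAt_pow n r).mul (hkS.hasDerivAt.pow 2)
  have hC := ((hasDerivAt_pow n r).const_mul lam).div_const 2
  have hE := (hasDerivAt_inv_pow (n - 2) hr).const_mul (q ^ 2 / 2)
  rw [chargedHawkingMass_eq hn]
  refine ((((hA.div_const 2).add (hB.div_const (2 * ((n : ℝ) - 1) ^ 2))).add hC).add
    hE).congr_deriv ?_
  have hn1 : (n : ℝ) - 1 ≠ 0 := by
    have : (2 : ℝ) ≤ n := by exact_mod_cast hn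
    linarith
  have hrn : r ^ n = r ^ (n - 1) * r := by rw [← pow_succ, Nat.sub_add_cancel (by omega)]
  rw [show n - 2 + 1 = n - 1 by omega, hrn, Nat.cast_sub hn]
  simp only [sphScalCurv]
  field_simp
  ring

lemma charge_term_eq_of_gaussLaw {n : ℕ} (hn : 3 ≤ n) {r v E q : ℝ} (hr : r ≠ 0) (hv : 0 ≤ v)
    (hq : √(2 / (((n : ℝ) - 1) * ((n : ℝ) - 2))) * r ^ (n - 1) * √v * E = q) :
    ((n : ℝ) - 2) * q ^ 2 / (2 * r ^ (n - 1)) = r ^ (n - 1) * v * E ^ 2 / ((n : ℝ) - 1) := by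
  have hn' : (3 : ℝ) ≤ n := by exact_mod_cast hn
  have hn1 : (n : ℝ) - 1 ≠ 0 := by linarith
  have hn2 : (n : ℝ) - 2 ≠ 0 := by linarith
  have hc : √(2 / (((n : ℝ) - 1) * ((n : ℝ) - 2))) ^ 2 = 2 / (((n : ℝ) - 1) * ((n : ℝ) - 2)) :=
    Real.sq_sqrt (div_nonneg zero_le_two (mul_nonneg (by linarith) (by linarith)))
  rw [← hq, mul_pow, mul_pow, mul_pow, hc, Real.sq_sqrt hv]
  field_simp

lemma radialConstraints_combination {N R kI kS dkS v E lam μ J H r : ℝ} (hN : N - 1 ≠ 0)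
    (hH : H ≠ 0)
    (hμ : 16 * π * μ = R + (kI + kS) ^ 2 - kI ^ 2 - kS ^ 2 / (N - 1) - 2 * v * E ^ 2
      + N * (N - 1) * lam)
    (hJ : 8 * π * J = H * (kI - kS / (N - 1) - r * dkS / (N - 1))) :
    R + N * kS ^ 2 / (N - 1) + 2 * r * kS * dkS / (N - 1) + N * (N - 1) * lam
      - 2 * v * E ^ 2 = 16 * π * (μ - kS * J / H) := by
  have hJH : J / H = (kI - kS / (N - 1) - r * dkS / (N - 1)) / (8 * π) := by
    rw [div_eq_div_iff hH (by positivity)]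
    linear_combination hJ
  have hNk : N * kS ^ 2 / (N - 1) = kS ^ 2 + kS ^ 2 / (N - 1) := by
    field_simp
    ring
  have hπ : 16 * π * (kS * ((kI - kS / (N - 1) - r * dkS / (N - 1)) / (8 * π)))
      = 2 * kS * (kI - kS / (N - 1) - r * dkS / (N - 1)) := by
    field_simp
    ring
  rw [hNk, mul_div_assoc kS, hJH]
  linear_combination -hμ + hπ

lemma mul_div_le_of_abs_le {k J H μ : ℝ} (hH : 0 < H) (hk : |k| ≤ H) (hJ : |J| ≤ μ) :
    k * J / H ≤ μ := by
  rw [div_le_iff₀ hH]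
  calc k * J ≤ |k| * |J| := (le_abs_self _).trans (abs_mul _ _).le
    _ ≤ μ * H := by rw [mul_comm μ]; exact mul_le_mul hk hJ (abs_nonneg _) hH.le

theorem chargedHawkingMass_monotone_general (n : ℕ) (hn : 3 ≤ n) (lam rp : ℝ)
    (hrp : 0 < rp) (V kI kS EI μ J : ℝ → ℝ) (q : ℝ)
    (hVpos : ∀ r, rp < r → 0 < V r)
    (hVd : ∀ r, rp < r → DifferentiableAt ℝ V r)
    (hkSd : ∀ r, rp < r → DifferentiableAt ℝ kS r)
    -- Hamiltonian constraint
    (hmu : ∀ r, rp < r → 16 * π * μ r =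
      sphScalCurv n V r + (kI r + kS r) ^ 2 - kI r ^ 2 - kS r ^ 2 / ((n : ℝ) - 1)
        - 2 * V r * EI r ^ 2 + (n : ℝ) * ((n : ℝ) - 1) * lam)
    -- momentum constraint
    (hJ : ∀ r, rp < r → 8 * π * J r =
      sphMeanCurv n V r *
        (kI r - kS r / ((n : ℝ) - 1) - r * deriv kS r / ((n : ℝ) - 1)))
    -- Gauss law with charge `q`
    (hq : ∀ r, rp ≤ r →
      Real.sqrt (2 / (((n : ℝ) - 1) * ((n : ℝ) - 2))) * r ^ (n - 1) * Real.sqrt (V r) * EI r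
        = q)
    -- dominant energy condition
    (hDEC : ∀ r, rp < r → |J r| ≤ μ r)
    -- outermost condition
    (hout : ∀ r, rp < r → |kS r| < sphMeanCurv n V r)
    -- continuity of the charged Hawking mass at the horizon `r = rp`
    (hcont : ContinuousWithinAt (chargedHawkingMass n lam q V kS) (Set.Ici rp) rp) :
    ∀ r₁ r₂ : ℝ, rp ≤ r₁ → r₁ ≤ r₂ →
      chargedHawkingMass n lam q V kS r₁ ≤ chargedHawkingMass n lam q V kS r₂ := by
  have hn1 : 0 < (n : ℝ) - 1 := by
    have : (3 : ℝ) ≤ n := by exact_mod_cast hn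
    linarith
  have hderiv : ∀ r, rp < r → HasDerivAt (chargedHawkingMass n lam q V kS)
      (8 * π * r ^ (n - 1) / ((n : ℝ) - 1) * (μ r - kS r * J r / sphMeanCurv n V r)) r := by
    intro r hr
    have hr0 : r ≠ 0 := (hrp.trans hr).ne'
    have hH : sphMeanCurv n V r ≠ 0 := ((abs_nonneg _).trans_lt (hout r hr)).ne'
    refine (hasDerivAt_chargedHawkingMass (by omega) lam q hr0 (hVd r hr)
      (hkSd r hr)).congr_deriv ?_
    rw [charge_term_eq_of_gaussLaw hn hr0 (hVpos r hr).le (hq r hr.le)]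
    linear_combination r ^ (n - 1) / ((n : ℝ) - 1) / 2 *
      radialConstraints_combination hn1.ne' hH (hmu r hr) (hJ r hr)
  refine fun r₁ r₂ h₁ h₁₂ => monotoneOn_Ici_of_hasDerivAt_nonneg hcont hderiv
    (fun r hr => mul_nonneg ?_ (sub_nonneg.2 ?_)) h₁ (h₁.trans h₁₂) h₁₂
  · have := hrp.trans hr
    positivity
  · exact mul_div_le_of_abs_le ((abs_nonneg _).trans_lt (hout r hr)) (hout r hr).le (hDEC r hr)

/-- Monotonicity of the charged Hawking mass (Proposition 2.2): under the radial
Einstein–Maxwell constraints, the Gauss law, the dominant energy condition `μ̂ ≥ |Ĵ_ν|`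
and the outermost condition `H > |k_S|`, the charged Hawking mass is non-decreasing
on `[r₊, ∞)`. -/
theorem chargedHawkingMass_monotone (n : ℕ) (hn : 3 ≤ n) (lam rp : ℝ) (hlam : 0 ≤ lam)
    (hrp : 0 < rp) (V kI kS EI μ J : ℝ → ℝ) (q : ℝ)
    (hV0 : ∀ r, rp ≤ r → 0 ≤ V r) (hVpos : ∀ r, rp < r → 0 < V r)
    (hVd : ∀ r, rp < r → DifferentiableAt ℝ V r)
    (hkSd : ∀ r, rp < r → DifferentiableAt ℝ kS r)
    (hEIcont : Continuous EI)
    -- Hamiltonian constraint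
    (hmu : ∀ r, rp < r → 16 * π * μ r =
      sphScalCurv n V r + (kI r + kS r) ^ 2 - kI r ^ 2 - kS r ^ 2 / ((n : ℝ) - 1)
        - 2 * V r * EI r ^ 2 + (n : ℝ) * ((n : ℝ) - 1) * lam)
    -- momentum constraint
    (hJ : ∀ r, rp < r → 8 * π * J r =
      sphMeanCurv n V r *
        (kI r - kS r / ((n : ℝ) - 1) - r * deriv kS r / ((n : ℝ) - 1)))
    -- Gauss law with charge `q`
    (hq : ∀ r, rp ≤ r →
      Real.sqrt (2 / (((n : ℝ) - 1) * ((n : ℝ) - 2))) * r ^ (n - 1) * Real.sqrt (V r) * EI r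
        = q)
    -- dominant energy condition
    (hDEC : ∀ r, rp < r → |J r| ≤ μ r)
    -- outermost condition
    (hout : ∀ r, rp < r → |kS r| < sphMeanCurv n V r)
    -- continuity of the charged Hawking mass at the horizon `r = rp`
    (hcont : ContinuousWithinAt (chargedHawkingMass n lam q V kS) (Set.Ici rp) rp) :
    ∀ r₁ r₂ : ℝ, rp ≤ r₁ → r₁ ≤ r₂ →
      chargedHawkingMass n lam q V kS r₁ ≤ chargedHawkingMass n lam q V kS r₂ :=
  chargedHawkingMass_monotone_general n hn lam rp hrp V kI kS EI μ J q hVpos hVd hkSd hmu hJ hq hDEC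
    hout hcont
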